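/- arXiv:1904.00779 — 2 statements merged into one kernel-verified Lean document; each statement's English description precedes it below -/
import Mathlib

section
/- Let b,c be positive integers with bc≥4 and u=bc−2. The 2×2 matrices D_n defined via Chebyshev polynomials (for n≥2 as in the rank-2 cluster algebra) are pairwise distinct: if 2≤m<n then D_m ≠ D_n. In particular, the map n ↦ D_n is injective on integers n≥2. -/
open Matrix

/-- The rank-2 `D`-matrix given by the Chebyshev formulas (even/odd cases). -/
def chebDMatrix (S : ℤ → ℝ) (b c : ℤ) (n : ℤ) : Matrix (Fin 2) (Fin 2) ℝ :=
  if n % 2 = 0 then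
    !![S ((n - 2) / 2) + S ((n - 4) / 2), (b : ℝ) * S ((n - 2) / 2);
       (c : ℝ) * S ((n - 4) / 2), S ((n - 2) / 2) + S ((n - 4) / 2)]
  else
    !![S ((n - 1) / 2) + S ((n - 3) / 2), (b : ℝ) * S ((n - 3) / 2);
       (c : ℝ) * S ((n - 3) / 2), S ((n - 3) / 2) + S ((n - 5) / 2)]

/-!
For `u ≥ 2` the Chebyshev sequence `S_p(u)` grows by at least `1` at each step from `p = -1` on,
so it is strictly increasing. Since `⌊(n-1)/2⌋ + ⌊(n-2)/2⌋ = n - 2`, reading the top row of `D_n`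
as `(S_{⌊(n-1)/2⌋} + S_{⌊(n-3)/2⌋}, b S_{⌊(n-2)/2⌋})` in both parities recovers `n`.
-/

section Chebyshev

variable {f : ℤ → ℝ} {u : ℝ}

lemma chebyshev_nonneg_and_add_one_le (hu : 2 ≤ u) (hm1 : f (-1) = 0) (h0 : f 0 = 1)
    (hrec : ∀ p, 1 ≤ p → f p = u * f (p - 1) - f (p - 2)) :
    ∀ p, -1 ≤ p → 0 ≤ f p ∧ f p + 1 ≤ f (p + 1) := by
  refine Int.leInduction ⟨hm1.ge, by norm_num [hm1, h0]⟩ fun p hp ⟨hnonneg, hstep⟩ ↦ ?_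
  have hrec' : f (p + 1 + 1) = u * f (p + 1) - f p := by
    rw [show p + 1 + 1 = p + 2 by ring, hrec (p + 2) (by omega)]
    ring_nf
  have hnext_nonneg : 0 ≤ f (p + 1) := by linarith
  -- `f (p+2) - f (p+1) = (f (p+1) - f p) + (u - 2) f (p+1)`
  refine ⟨hnext_nonneg, ?_⟩
  rw [hrec']
  linarith [mul_nonneg (sub_nonneg.2 hu) hnext_nonneg]

lemma chebyshev_strictMonoOn (hu : 2 ≤ u) (hm1 : f (-1) = 0) (h0 : f 0 = 1)
    (hrec : ∀ p, 1 ≤ p → f p = u * f (p - 1) - f (p - 2)) :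
    StrictMonoOn f (Set.Ici (-1)) :=
  strictMonoOn_of_lt_add_one Set.ordConnected_Ici fun p _ hp _ ↦
    by linarith [(chebyshev_nonneg_and_add_one_le hu hm1 h0 hrec p hp).2]

end Chebyshev

lemma StrictMonoOn.add_comp_sub_one {f : ℤ → ℝ} (hf : StrictMonoOn f (Set.Ici (-1))) :
    StrictMonoOn (fun k ↦ f k + f (k - 1)) (Set.Ici 0) := by
  intro k hk l hl hkl
  simp only [Set.mem_Ici] at hk hl
  exact add_lt_add (hf (by simp; omega) (by simp; omega) hkl)
    (hf (by simp; omega) (by simp; omega) (by omega))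

section chebDMatrix

variable (S : ℤ → ℝ) (b c n : ℤ)

lemma chebDMatrix_apply_zero_zero :
    chebDMatrix S b c n 0 0 = S ((n - 1) / 2) + S ((n - 3) / 2) := by
  unfold chebDMatrix
  split_ifs with hn
  · simp only [of_apply, cons_val', cons_val_zero, empty_val', cons_val_fin_one]
    rw [show (n - 2) / 2 = (n - 1) / 2 by omega, show (n - 4) / 2 = (n - 3) / 2 by omega]
  · simp

lemma chebDMatrix_apply_zero_one :
    chebDMatrix S b c n 0 1 = b * S ((n - 2) / 2) := by
  unfold chebDMatrix
  split_ifs with hn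
  · simp
  · simp only [of_apply, cons_val', cons_val_one, cons_val_zero, empty_val', cons_val_fin_one]
    rw [show (n - 3) / 2 = (n - 2) / 2 by omega]

end chebDMatrix

lemma chebDMatrix_injOn {S : ℤ → ℝ} (hS : StrictMonoOn S (Set.Ici (-1))) {b : ℤ} (hb : b ≠ 0)
    (c : ℤ) : Set.InjOn (chebDMatrix S b c) {n : ℤ | 1 ≤ n} := by
  intro m hm n hn hmn
  simp only [Set.mem_ofPred_eq] at hm hn
  have h01 := congrFun (congrFun hmn 0) 1
  have h00 := congrFun (congrFun hmn 0) 0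
  rw [chebDMatrix_apply_zero_one, chebDMatrix_apply_zero_one,
    mul_right_inj' (Int.cast_ne_zero.mpr hb)] at h01
  rw [chebDMatrix_apply_zero_zero, chebDMatrix_apply_zero_zero,
    show (m - 3) / 2 = (m - 1) / 2 - 1 by omega, show (n - 3) / 2 = (n - 1) / 2 - 1 by omega] at h00
  have hlow : (m - 2) / 2 = (n - 2) / 2 :=
    hS.injOn (by simp; omega) (by simp; omega) h01
  have hhigh : (m - 1) / 2 = (n - 1) / 2 :=
    hS.add_comp_sub_one.injOn (by simp; omega) (by simp; omega) h00
  omega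

theorem rank2_Dmatrix_pairwise_distinct_general
    (S : ℝ → ℤ → ℝ)
    (hSm1 : ∀ u : ℝ, S u (-1) = 0)
    (hS0 : ∀ u : ℝ, S u 0 = 1)
    (hSrec : ∀ (u : ℝ) (p : ℤ), 1 ≤ p → S u p = u * S u (p - 1) - S u (p - 2))
    (b c : ℤ) (hbc : 4 ≤ b * c) :
    (∀ m n : ℤ, 2 ≤ m → m < n →
        chebDMatrix (S ((b * c - 2 : ℤ) : ℝ)) b c m ≠ chebDMatrix (S ((b * c - 2 : ℤ) : ℝ)) b c n) ∧
    Set.InjOn (chebDMatrix (S ((b * c - 2 : ℤ) : ℝ)) b c) {n : ℤ | 2 ≤ n} := by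
  have hu : (2 : ℝ) ≤ ((b * c - 2 : ℤ) : ℝ) := by exact_mod_cast (by omega : (2 : ℤ) ≤ b * c - 2)
  have hb : b ≠ 0 := left_ne_zero_of_mul (by omega : b * c ≠ 0)
  have hinj : Set.InjOn (chebDMatrix (S ((b * c - 2 : ℤ) : ℝ)) b c) {n : ℤ | 2 ≤ n} :=
    (chebDMatrix_injOn (chebyshev_strictMonoOn hu (hSm1 _) (hS0 _) (hSrec _)) hb c).mono
      fun n (hn : 2 ≤ n) ↦ show 1 ≤ n by omega
  exact ⟨fun m n hm hmn heq ↦ hmn.ne (hinj hm (show 2 ≤ n by omega) heq), hinj⟩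

/-- For positive integers `b, c` with `bc ≥ 4` and `u = bc - 2`, the rank-2 `D`-matrices
`D_n` (`n ≥ 2`) are pairwise distinct; in particular `n ↦ D_n` is injective on `n ≥ 2`. -/
theorem rank2_Dmatrix_pairwise_distinct
    (S : ℝ → ℤ → ℝ)
    (hSm1 : ∀ u : ℝ, S u (-1) = 0)
    (hS0 : ∀ u : ℝ, S u 0 = 1)
    (hSrec : ∀ (u : ℝ) (p : ℤ), 1 ≤ p → S u p = u * S u (p - 1) - S u (p - 2))
    (b c : ℤ) (hb : 1 ≤ b) (hc : 1 ≤ c) (hbc : 4 ≤ b * c) :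
    (∀ m n : ℤ, 2 ≤ m → m < n →
        chebDMatrix (S ((b * c - 2 : ℤ) : ℝ)) b c m ≠ chebDMatrix (S ((b * c - 2 : ℤ) : ℝ)) b c n) ∧
    Set.InjOn (chebDMatrix (S ((b * c - 2 : ℤ) : ℝ)) b c) {n : ℤ | 2 ≤ n} :=
  rank2_Dmatrix_pairwise_distinct_general S hSm1 hS0 hSrec b c hbc
end

section
/- In the rank-2 cluster pattern with initial exchange matrix B=[[0,b],[-c,0]] (b,c≥0, bc≥4), the only labeled seeds containing an initial cluster variable are Σ_0, Σ_1 and Σ_{−1}; equivalently, for |n|≥2 both d-vectors d_{1;n} and d_{2;n} are nonnegative and nonzero. -/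
/-!
With `u = bc - 2 ≥ 2` the Chebyshev values grow by at least one at each step from `S_{-1} = 0`,
so `S_p ≥ 0` for `p ≥ -1` and `S_p ≥ 1` for `p ≥ 0`. For `n ≥ 2` every entry of `D_n` is a
nonnegative combination of such values and each diagonal entry contains some `S_p` with `p ≥ 0`;
hence every column is nonnegative with a positive diagonal entry. The case `n ≤ -2` is the same
statement for the transposed formulas.
-/

open Matrix

structure IsChebyshevS (u : ℝ) (S : ℤ → ℝ) : Prop where
  neg_one : S (-1) = 0
  zero : S 0 = 1
  recurrence : ∀ p : ℤ, 1 ≤ p → S p = u * S (p - 1) - S (p - 2)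

namespace IsChebyshevS

variable {u : ℝ} {S : ℤ → ℝ}

/-- For `u ≥ 2` and `S_p ≥ 0` the increments never decrease,
`S_{p+1} - S_p ≥ S_p - S_{p-1}`, so they stay `≥ S_0 - S_{-1} = 1`. -/
theorem nonneg_and_sub_one_add_one_le (hS : IsChebyshevS u S) (hu : 2 ≤ u) (p : ℤ) (hp : 0 ≤ p) :
    0 ≤ S (p - 1) ∧ S (p - 1) + 1 ≤ S p := by
  induction p, hp using Int.leInduction with
  | base => simp [hS.neg_one, hS.zero]
  | succ p hp ih =>
    obtain ⟨hprev, hstep⟩ := ih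
    have hSp : 0 ≤ S p := by linarith
    have hrec := hS.recurrence (p + 1) (by omega)
    rw [add_sub_cancel_right, show p + 1 - 2 = p - 1 by ring] at hrec
    rw [add_sub_cancel_right, hrec]
    exact ⟨hSp, by nlinarith⟩

theorem nonneg (hS : IsChebyshevS u S) (hu : 2 ≤ u) (p : ℤ) (hp : -1 ≤ p) : 0 ≤ S p := by
  simpa using (hS.nonneg_and_sub_one_add_one_le hu (p + 1) (by omega)).1

theorem one_le (hS : IsChebyshevS u S) (hu : 2 ≤ u) (p : ℤ) (hp : 0 ≤ p) : 1 ≤ S p := by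
  have := hS.nonneg_and_sub_one_add_one_le hu p hp
  linarith

end IsChebyshevS

section chebDMatrix

variable {S : ℤ → ℝ}

theorem chebDMatrix_nonneg (hS_nonneg : ∀ p, -1 ≤ p → 0 ≤ S p) {b c : ℤ} (hb : 0 ≤ b)
    (hc : 0 ≤ c) {n : ℤ} (hn : 2 ≤ n) (i j : Fin 2) : 0 ≤ chebDMatrix S b c n i j := by
  have hb' : (0 : ℝ) ≤ b := by exact_mod_cast hb
  have hc' : (0 : ℝ) ≤ c := by exact_mod_cast hc
  unfold chebDMatrix
  split_ifs
  · have := hS_nonneg ((n - 2) / 2) (by omega)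
    have := hS_nonneg ((n - 4) / 2) (by omega)
    fin_cases i <;> fin_cases j <;>
      simp only [Fin.mk_one, Fin.zero_eta, Fin.isValue, of_apply, cons_val', cons_val_zero,
        cons_val_one, cons_val_fin_one] <;> positivity
  · have := hS_nonneg ((n - 1) / 2) (by omega)
    have := hS_nonneg ((n - 3) / 2) (by omega)
    have := hS_nonneg ((n - 5) / 2) (by omega)
    fin_cases i <;> fin_cases j <;>
      simp only [Fin.mk_one, Fin.zero_eta, Fin.isValue, of_apply, cons_val', cons_val_zero,
        cons_val_one, cons_val_fin_one] <;> positivity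

theorem chebDMatrix_diag_pos (hS_nonneg : ∀ p, -1 ≤ p → 0 ≤ S p)
    (hS_one_le : ∀ p, 0 ≤ p → 1 ≤ S p) (b c : ℤ) {n : ℤ} (hn : 2 ≤ n) (i : Fin 2) :
    0 < chebDMatrix S b c n i i := by
  unfold chebDMatrix
  split_ifs
  · have := hS_one_le ((n - 2) / 2) (by omega)
    have := hS_nonneg ((n - 4) / 2) (by omega)
    fin_cases i <;>
      simp only [Fin.mk_one, Fin.zero_eta, Fin.isValue, of_apply, cons_val', cons_val_zero,
        cons_val_one, cons_val_fin_one] <;> linarith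
  · have := hS_one_le ((n - 1) / 2) (by omega)
    have := hS_one_le ((n - 3) / 2) (by omega)
    have := hS_nonneg ((n - 5) / 2) (by omega)
    fin_cases i <;>
      simp only [Fin.mk_one, Fin.zero_eta, Fin.isValue, of_apply, cons_val', cons_val_zero,
        cons_val_one, cons_val_fin_one] <;> linarith

end chebDMatrix

/-- In the rank-2 cluster pattern with initial matrix `[[0,b],[-c,0]]` (`b,c ≥ 0`, `bc ≥ 4`),
where the `D`-matrices are given by the Chebyshev formulas for `n ≥ 2` and the transposed
formulas with `b` and `c` swapped for `n ≤ -2`: for every `|n| ≥ 2` both `d`-vectors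
(columns of `D_n`) are nonnegative and nonzero; equivalently the only seeds containing an
initial cluster variable are `Σ₀, Σ₁, Σ₋₁`. -/
theorem rank2_noninitial_d_vectors_nonneg_nonzero
    (S : ℝ → ℤ → ℝ)
    (hSm1 : ∀ u : ℝ, S u (-1) = 0)
    (hS0 : ∀ u : ℝ, S u 0 = 1)
    (hSrec : ∀ (u : ℝ) (p : ℤ), 1 ≤ p → S u p = u * S u (p - 1) - S u (p - 2))
    (b c : ℤ) (hb : 0 ≤ b) (hc : 0 ≤ c) (hbc : 4 ≤ b * c)
    (D : ℤ → Matrix (Fin 2) (Fin 2) ℝ)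
    (hDpos : ∀ n : ℤ, 2 ≤ n → D n = chebDMatrix (S ((b * c - 2 : ℤ) : ℝ)) b c n)
    (hDneg : ∀ n : ℤ, n ≤ -2 → ∀ i j : Fin 2,
      D n i j = chebDMatrix (S ((b * c - 2 : ℤ) : ℝ)) c b (-n) (1 - i) (1 - j)) :
    ∀ n : ℤ, 2 ≤ |n| → ∀ j : Fin 2,
      (∀ i : Fin 2, 0 ≤ D n i j) ∧ (∃ i : Fin 2, D n i j ≠ 0) := by
  have hu : (2 : ℝ) ≤ ((b * c - 2 : ℤ) : ℝ) := by
    have : (2 : ℤ) ≤ b * c - 2 := by omega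
    exact_mod_cast this
  have hS : IsChebyshevS _ (S _) := ⟨hSm1 _, hS0 _, hSrec ((b * c - 2 : ℤ) : ℝ)⟩
  have hS_nonneg := hS.nonneg hu
  have hS_one_le := hS.one_le hu
  intro n hn j
  rcases le_abs'.mp hn with hneg | hpos
  · have hn' : 2 ≤ -n := by omega
    refine ⟨fun i => ?_, j, ?_⟩ <;> rw [hDneg n (by omega)]
    · exact chebDMatrix_nonneg hS_nonneg hc hb hn' _ _
    · exact (chebDMatrix_diag_pos hS_nonneg hS_one_le c b hn' _).ne'
  · rw [hDpos n hpos]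
    exact ⟨(chebDMatrix_nonneg hS_nonneg hb hc hpos · j),
      j, (chebDMatrix_diag_pos hS_nonneg hS_one_le b c hpos j).ne'⟩
end
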